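/- In the homogeneous case b = 0: if ΔB_c = 0, Δφ_c = 0, (1 - l₂²Δ)B_g = 0 with ∇·B_g = 0, and (1 - l₁²Δ)φ_g = 0, then u := B_c - (1/(4(1-ν)))∇(r·B_c + φ_c) + B_g + l₁²∇φ_g satisfies α(1 - l₁²Δ)∇(∇·u) - (1 - l₂²Δ)∇×(∇×u) = 0 with α = 2(1-ν)/(1-2ν). Moreover the classical part u_c := B_c - (1/(4(1-ν)))∇(r·B_c + φ_c) and the gradient part u_g := B_g + l₁²∇φ_g each satisfy the equation separately. -/

import Mathlib

open MeasureTheory Real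

noncomputable section

abbrev V3 := Fin 3 → ℝ

/-- partial derivative in direction `i` -/
def pd (i : Fin 3) (f : V3 → ℝ) (x : V3) : ℝ := fderiv ℝ f x (Pi.single i 1)

/-- gradient of a scalar field -/
def gradF (f : V3 → ℝ) : V3 → V3 := fun x i => pd i f x

/-- divergence of a vector field -/
def dvgF (v : V3 → V3) : V3 → ℝ := fun x => ∑ i, pd i (fun y => v y i) x

/-- Laplacian of a scalar field -/
def lapF (f : V3 → ℝ) : V3 → ℝ := fun x => ∑ i, pd i (fun y => pd i f y) x

/-- componentwise Laplacian of a vector field -/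
def vlapF (v : V3 → V3) : V3 → V3 := fun x i => lapF (fun y => v y i) x

/-- curl of a vector field -/
def curlF (v : V3 → V3) : V3 → V3 := fun x =>
  ![pd 1 (fun y => v y 2) x - pd 2 (fun y => v y 1) x,
    pd 2 (fun y => v y 0) x - pd 0 (fun y => v y 2) x,
    pd 0 (fun y => v y 1) x - pd 1 (fun y => v y 0) x]

/-- modified Helmholtz operator `(1 - s Δ)` on scalar fields (`s` is the squared length) -/
def hS (s : ℝ) (f : V3 → ℝ) : V3 → ℝ := fun x => f x - s * lapF f x

/-- modified Helmholtz operator `(1 - s Δ)` on vector fields (`s` is the squared length) -/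
def hV (s : ℝ) (v : V3 → V3) : V3 → V3 := fun x => v x - s • vlapF v x

/-- Euclidean norm on `Fin 3 → ℝ` -/
def enorm3 (x : V3) : ℝ := Real.sqrt (∑ i, (x i) ^ 2)

-- smoothness
lemma contDiff_pd {f : V3 → ℝ} (hf : ContDiff ℝ (⊤ : ℕ∞) f) (i : Fin 3) : ContDiff ℝ (⊤ : ℕ∞) (pd i f) :=
  (hf.fderiv_right (m := (⊤ : ℕ∞)) le_rfl).clm_apply contDiff_const

lemma da {f : V3 → ℝ} (hf : ContDiff ℝ (⊤ : ℕ∞) f) (x : V3) : DifferentiableAt ℝ f x :=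
  hf.differentiable (by simp) x

lemma pd_const (i : Fin 3) (c : ℝ) (x : V3) : pd i (fun _ => c) x = 0 := by
  simp [pd]

lemma pd_zero (i : Fin 3) (x : V3) : pd i (fun _ => (0:ℝ)) x = 0 := pd_const i 0 x

lemma pd_add {f g : V3 → ℝ} (i : Fin 3) (x : V3) (hf : DifferentiableAt ℝ f x)
    (hg : DifferentiableAt ℝ g x) : pd i (fun y => f y + g y) x = pd i f x + pd i g x := by
  simp [pd, fderiv_fun_add hf hg]

lemma pd_sub {f g : V3 → ℝ} (i : Fin 3) (x : V3) (hf : DifferentiableAt ℝ f x)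
    (hg : DifferentiableAt ℝ g x) : pd i (fun y => f y - g y) x = pd i f x - pd i g x := by
  simp [pd, fderiv_fun_sub hf hg]

lemma pd_neg {f : V3 → ℝ} (i : Fin 3) (x : V3) :
    pd i (fun y => -(f y)) x = -(pd i f x) := by
  simp [pd, fderiv_neg]

lemma pd_const_mul {f : V3 → ℝ} (c : ℝ) (i : Fin 3) (x : V3) (hf : DifferentiableAt ℝ f x) :
    pd i (fun y => c * f y) x = c * pd i f x := by
  simp [pd, fderiv_const_mul hf c]

lemma pd_mul {f g : V3 → ℝ} (i : Fin 3) (x : V3) (hf : DifferentiableAt ℝ f x)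
    (hg : DifferentiableAt ℝ g x) :
    pd i (fun y => f y * g y) x = f x * pd i g x + g x * pd i f x := by
  simp [pd, fderiv_fun_mul hf hg]

lemma pd_sum {ι : Type*} (s : Finset ι) (f : ι → V3 → ℝ) (i : Fin 3) (x : V3)
    (hf : ∀ j ∈ s, DifferentiableAt ℝ (f j) x) :
    pd i (fun y => ∑ j ∈ s, f j y) x = ∑ j ∈ s, pd i (f j) x := by
  simp [pd, fderiv_fun_sum hf]

lemma pd_coord (i j : Fin 3) (x : V3) :
    pd i (fun y : V3 => y j) x = if j = i then 1 else 0 := by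
  have h : (fun y : V3 => y j) = (ContinuousLinearMap.proj j : V3 →L[ℝ] ℝ) := rfl
  rw [pd, h, ContinuousLinearMap.fderiv]
  simp [Pi.single_apply]

lemma pd_comm {f : V3 → ℝ} (hf : ContDiff ℝ (⊤ : ℕ∞) f) (i j : Fin 3) (x : V3) :
    pd i (pd j f) x = pd j (pd i f) x := by
  have hdf : ContDiff ℝ (⊤ : ℕ∞) (fderiv ℝ f) := hf.fderiv_right (m := (⊤ : ℕ∞)) le_rfl
  have h1 : ∀ (k : Fin 3) (v : V3), pd k (fun y => fderiv ℝ f y v) x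
      = fderiv ℝ (fderiv ℝ f) x (Pi.single k 1) v := by
    intro k v
    rw [pd, fderiv_clm_apply (hdf.differentiable (by simp) x) (differentiableAt_const v)]
    simp
  have hsymm := second_derivative_symmetric (f' := fderiv ℝ f) (f'' := fderiv ℝ (fderiv ℝ f) x)
    (fun y => (hf.differentiable (by simp) y).hasFDerivAt)
    ((hdf.differentiable (by simp) x).hasFDerivAt) (Pi.single i 1) (Pi.single j 1)
  show pd i (fun y => fderiv ℝ f y (Pi.single j 1)) x
      = pd j (fun y => fderiv ℝ f y (Pi.single i 1)) x
  rw [h1 i, h1 j, ← hsymm]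

lemma pd_comm' {f : V3 → ℝ} (hf : ContDiff ℝ (⊤ : ℕ∞) f) (i j : Fin 3) :
    pd i (pd j f) = pd j (pd i f) := funext (pd_comm hf i j)


lemma contDiff_lapF {f : V3 → ℝ} (hf : ContDiff ℝ (⊤ : ℕ∞) f) : ContDiff ℝ (⊤ : ℕ∞) (lapF f) := by
  have : lapF f = fun x => ∑ i, pd i (pd i f) x := rfl
  rw [this]
  exact ContDiff.sum fun i _ => contDiff_pd (contDiff_pd hf i) i

lemma lapF_congr {f g : V3 → ℝ} (h : f = g) (x : V3) : lapF f x = lapF g x := by rw [h]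

lemma lapF_const (c : ℝ) (x : V3) : lapF (fun _ => c) x = 0 := by
  have : (fun y : V3 => pd 0 (fun _ => c) y) = fun _ => (0:ℝ) := funext fun y => pd_const _ _ _
  simp only [lapF]
  have : ∀ i : Fin 3, pd i (fun y => pd i (fun _ : V3 => c) y) x = 0 := by
    intro i
    have h2 : (fun y : V3 => pd i (fun _ : V3 => c) y) = fun _ => (0:ℝ) :=
      funext fun y => pd_const _ _ _
    rw [h2, pd_const]
  simp [this]

lemma lapF_add {f g : V3 → ℝ} (hf : ContDiff ℝ (⊤ : ℕ∞) f) (hg : ContDiff ℝ (⊤ : ℕ∞) g) (x : V3) :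
    lapF (fun y => f y + g y) x = lapF f x + lapF g x := by
  simp only [lapF]
  rw [← Finset.sum_add_distrib]
  refine Finset.sum_congr rfl fun i _ => ?_
  have h1 : (fun y => pd i (fun z => f z + g z) y) = fun y => pd i f y + pd i g y :=
    funext fun y => pd_add i y (da hf y) (da hg y)
  rw [h1, pd_add i x (da (contDiff_pd hf i) x) (da (contDiff_pd hg i) x)]

lemma lapF_sub {f g : V3 → ℝ} (hf : ContDiff ℝ (⊤ : ℕ∞) f) (hg : ContDiff ℝ (⊤ : ℕ∞) g) (x : V3) :
    lapF (fun y => f y - g y) x = lapF f x - lapF g x := by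
  simp only [lapF]
  rw [← Finset.sum_sub_distrib]
  refine Finset.sum_congr rfl fun i _ => ?_
  have h1 : (fun y => pd i (fun z => f z - g z) y) = fun y => pd i f y - pd i g y :=
    funext fun y => pd_sub i y (da hf y) (da hg y)
  rw [h1, pd_sub i x (da (contDiff_pd hf i) x) (da (contDiff_pd hg i) x)]

lemma lapF_neg {f : V3 → ℝ} (hf : ContDiff ℝ (⊤ : ℕ∞) f) (x : V3) :
    lapF (fun y => -(f y)) x = -(lapF f x) := by
  simp only [lapF]
  rw [← Finset.sum_neg_distrib]
  refine Finset.sum_congr rfl fun i _ => ?_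
  have h1 : (fun y => pd i (fun z => -(f z)) y) = fun y => -(pd i f y) :=
    funext fun y => pd_neg i y
  rw [h1, pd_neg]

lemma lapF_const_mul {f : V3 → ℝ} (c : ℝ) (hf : ContDiff ℝ (⊤ : ℕ∞) f) (x : V3) :
    lapF (fun y => c * f y) x = c * lapF f x := by
  simp only [lapF]
  rw [Finset.mul_sum]
  refine Finset.sum_congr rfl fun i _ => ?_
  have h1 : (fun y => pd i (fun z => c * f z) y) = fun y => c * pd i f y :=
    funext fun y => pd_const_mul c i y (da hf y)
  rw [h1, pd_const_mul c i x (da (contDiff_pd hf i) x)]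

/-- Laplacian commutes with partial derivative for smooth functions -/
lemma lapF_pd {f : V3 → ℝ} (hf : ContDiff ℝ (⊤ : ℕ∞) f) (k : Fin 3) (x : V3) :
    lapF (pd k f) x = pd k (lapF f) x := by
  have step : ∀ i : Fin 3, pd i (pd i (pd k f)) x = pd k (pd i (pd i f)) x := by
    intro i
    rw [pd_comm' hf i k, pd_comm (contDiff_pd hf i) i k]
  have hrhs : pd k (lapF f) x = ∑ i, pd k (pd i (pd i f)) x := by
    have : lapF f = fun y => ∑ i, pd i (pd i f) y := rfl
    rw [this, pd_sum]
    intro j _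
    exact da (contDiff_pd (contDiff_pd hf j) j) x
  rw [hrhs]
  exact Finset.sum_congr rfl fun i _ => step i

lemma contDiff_dvgF {v : V3 → V3} (hv : ∀ k, ContDiff ℝ (⊤ : ℕ∞) (fun y => v y k)) :
    ContDiff ℝ (⊤ : ℕ∞) (dvgF v) := by
  have : dvgF v = fun x => ∑ i, pd i (fun y => v y i) x := rfl
  rw [this]
  exact ContDiff.sum fun i _ => contDiff_pd (hv i) i

lemma pd_dvgF {v : V3 → V3} (hv : ∀ k, ContDiff ℝ (⊤ : ℕ∞) (fun y => v y k)) (k : Fin 3) (x : V3) :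
    pd k (dvgF v) x = ∑ i, pd k (pd i (fun y => v y i)) x := by
  have : dvgF v = fun x => ∑ i, pd i (fun y => v y i) x := rfl
  rw [this, pd_sum]
  intro j _
  exact da (contDiff_pd (hv j) j) x


lemma vlapF_expand (v : V3 → V3) (x : V3) (m : Fin 3) :
    vlapF v x m = pd 0 (pd 0 (fun y => v y m)) x
      + pd 1 (pd 1 (fun y => v y m)) x + pd 2 (pd 2 (fun y => v y m)) x := by
  show ∑ i, pd i (fun y => pd i (fun z => v z m) y) x = _
  rw [Fin.sum_univ_three]

/-- curl curl = grad div - Laplacian -/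
lemma curl_curl_eq {v : V3 → V3} (hv : ∀ k, ContDiff ℝ (⊤ : ℕ∞) (fun y => v y k)) (x : V3) (k : Fin 3) :
    curlF (curlF v) x k = pd k (dvgF v) x - vlapF v x k := by
  have key : ∀ (j a b : Fin 3) (c d : Fin 3),
      pd j (fun y => pd a (fun z => v z c) y - pd b (fun z => v z d) y) x
      = pd a (pd j (fun z => v z c)) x - pd b (pd j (fun z => v z d)) x := by
    intro j a b c d
    rw [pd_sub j x (da (contDiff_pd (hv c) a) x) (da (contDiff_pd (hv d) b) x),
      pd_comm (hv c) j a, pd_comm (hv d) j b]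
  have h0 : curlF (curlF v) x 0 = pd 0 (dvgF v) x - vlapF v x 0 := by
    simp only [curlF, Matrix.cons_val_zero, Matrix.cons_val_one, Matrix.head_cons,
      Matrix.cons_val_two, Matrix.tail_cons, Fin.isValue]
    rw [key, key, pd_dvgF hv, Fin.sum_univ_three, vlapF_expand]
    ring
  have h1 : curlF (curlF v) x 1 = pd 1 (dvgF v) x - vlapF v x 1 := by
    simp only [curlF, Matrix.cons_val_zero, Matrix.cons_val_one, Matrix.head_cons,
      Matrix.cons_val_two, Matrix.tail_cons, Fin.isValue]
    rw [key, key, pd_dvgF hv, Fin.sum_univ_three, vlapF_expand]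
    ring
  have h2 : curlF (curlF v) x 2 = pd 2 (dvgF v) x - vlapF v x 2 := by
    simp only [curlF, Matrix.cons_val_zero, Matrix.cons_val_one, Matrix.head_cons,
      Matrix.cons_val_two, Matrix.tail_cons, Fin.isValue]
    rw [key, key, pd_dvgF hv, Fin.sum_univ_three, vlapF_expand]
    ring
  fin_cases k
  · exact h0
  · exact h1
  · exact h2

lemma lapF_sum {ι : Type*} (s : Finset ι) (f : ι → V3 → ℝ) (hf : ∀ j ∈ s, ContDiff ℝ (⊤ : ℕ∞) (f j))
    (x : V3) : lapF (fun y => ∑ j ∈ s, f j y) x = ∑ j ∈ s, lapF (f j) x := by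
  simp only [lapF]
  rw [Finset.sum_comm]
  refine Finset.sum_congr rfl fun i _ => ?_
  have h1 : (fun y => pd i (fun z => ∑ j ∈ s, f j z) y) = fun y => ∑ j ∈ s, pd i (f j) y :=
    funext fun y => pd_sum s f i y (fun j hj => da (hf j hj) y)
  rw [h1, pd_sum s _ i x (fun j hj => da (contDiff_pd (hf j hj) i) x)]

lemma hV_apply (s : ℝ) (v : V3 → V3) (x : V3) (k : Fin 3) :
    hV s v x k = v x k - s * lapF (fun y => v y k) x := by
  simp [hV, vlapF]

lemma contDiff_curl_comp {v : V3 → V3} (hv : ∀ k, ContDiff ℝ (⊤ : ℕ∞) (fun y => v y k)) (k : Fin 3) :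
    ContDiff ℝ (⊤ : ℕ∞) (fun y => curlF v y k) := by
  fin_cases k <;>
    simp only [curlF, Matrix.cons_val_zero, Matrix.cons_val_one, Matrix.head_cons,
      Matrix.cons_val_two, Matrix.tail_cons, Fin.isValue] <;>
  · exact ContDiff.sub (contDiff_pd (hv _) _) (contDiff_pd (hv _) _)

lemma curlF_add {v w : V3 → V3} (hv : ∀ k, ContDiff ℝ (⊤ : ℕ∞) (fun y => v y k))
    (hw : ∀ k, ContDiff ℝ (⊤ : ℕ∞) (fun y => w y k)) :
    curlF (fun y => v y + w y) = fun x => curlF v x + curlF w x := by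
  funext x k
  have key : ∀ a b : Fin 3, pd a (fun y => v y b + w y b) x
      = pd a (fun y => v y b) x + pd a (fun y => w y b) x :=
    fun a b => pd_add a x (da (hv b) x) (da (hw b) x)
  have h0 : curlF (fun y => v y + w y) x 0 = curlF v x 0 + curlF w x 0 := by
    show pd 1 (fun y => v y 2 + w y 2) x - pd 2 (fun y => v y 1 + w y 1) x
      = (pd 1 (fun y => v y 2) x - pd 2 (fun y => v y 1) x)
        + (pd 1 (fun y => w y 2) x - pd 2 (fun y => w y 1) x)
    rw [key, key]; ring
  have h1 : curlF (fun y => v y + w y) x 1 = curlF v x 1 + curlF w x 1 := by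
    show pd 2 (fun y => v y 0 + w y 0) x - pd 0 (fun y => v y 2 + w y 2) x
      = (pd 2 (fun y => v y 0) x - pd 0 (fun y => v y 2) x)
        + (pd 2 (fun y => w y 0) x - pd 0 (fun y => w y 2) x)
    rw [key, key]; ring
  have h2 : curlF (fun y => v y + w y) x 2 = curlF v x 2 + curlF w x 2 := by
    show pd 0 (fun y => v y 1 + w y 1) x - pd 1 (fun y => v y 0 + w y 0) x
      = (pd 0 (fun y => v y 1) x - pd 1 (fun y => v y 0) x)
        + (pd 0 (fun y => w y 1) x - pd 1 (fun y => w y 0) x)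
    rw [key, key]; ring
  show curlF (fun y => v y + w y) x k = curlF v x k + curlF w x k
  fin_cases k
  · exact h0
  · exact h1
  · exact h2

lemma dvgF_add {v w : V3 → V3} (hv : ∀ k, ContDiff ℝ (⊤ : ℕ∞) (fun y => v y k))
    (hw : ∀ k, ContDiff ℝ (⊤ : ℕ∞) (fun y => w y k)) :
    dvgF (fun y => v y + w y) = fun y => dvgF v y + dvgF w y := by
  funext y
  simp only [dvgF, Pi.add_apply]
  rw [← Finset.sum_add_distrib]
  exact Finset.sum_congr rfl fun i _ => pd_add i y (da (hv i) y) (da (hw i) y)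

lemma hV_grad_dvg_add {v w : V3 → V3} (hv : ∀ k, ContDiff ℝ (⊤ : ℕ∞) (fun y => v y k))
    (hw : ∀ k, ContDiff ℝ (⊤ : ℕ∞) (fun y => w y k)) (s : ℝ) (x : V3) :
    hV s (gradF (dvgF (fun y => v y + w y))) x
      = hV s (gradF (dvgF v)) x + hV s (gradF (dvgF w)) x := by
  funext k
  have hdv := dvgF_add hv hw
  have hfun : (fun y => gradF (dvgF (fun z => v z + w z)) y k)
      = fun y => pd k (dvgF v) y + pd k (dvgF w) y := by
    funext y
    show pd k (dvgF (fun z => v z + w z)) y = _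
    rw [hdv, pd_add k y (da (contDiff_dvgF hv) y) (da (contDiff_dvgF hw) y)]
  rw [Pi.add_apply, hV_apply, hV_apply, hV_apply, hfun,
    lapF_add (contDiff_pd (contDiff_dvgF hv) k) (contDiff_pd (contDiff_dvgF hw) k)]
  show pd k (dvgF (fun z => v z + w z)) x - _ = pd k (dvgF v) x - _ + (pd k (dvgF w) x - _)
  rw [hdv, pd_add k x (da (contDiff_dvgF hv) x) (da (contDiff_dvgF hw) x)]
  show _ = pd k (dvgF v) x - s * lapF (fun y => pd k (dvgF v) y) x
    + (pd k (dvgF w) x - s * lapF (fun y => pd k (dvgF w) y) x)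
  ring

lemma hV_add {p q : V3 → V3} (hp : ∀ k, ContDiff ℝ (⊤ : ℕ∞) (fun y => p y k))
    (hq : ∀ k, ContDiff ℝ (⊤ : ℕ∞) (fun y => q y k)) (s : ℝ) (x : V3) :
    hV s (fun y => p y + q y) x = hV s p x + hV s q x := by
  funext k
  have hfun : (fun y => (fun z => p z + q z) y k) = fun y => p y k + q y k := rfl
  rw [Pi.add_apply, hV_apply, hV_apply, hV_apply, hfun, lapF_add (hp k) (hq k)]
  show p x k + q x k - s * _ = _
  ring

lemma hV_curlcurl_add {v w : V3 → V3} (hv : ∀ k, ContDiff ℝ (⊤ : ℕ∞) (fun y => v y k))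
    (hw : ∀ k, ContDiff ℝ (⊤ : ℕ∞) (fun y => w y k)) (s : ℝ) (x : V3) :
    hV s (curlF (curlF (fun y => v y + w y))) x
      = hV s (curlF (curlF v)) x + hV s (curlF (curlF w)) x := by
  rw [curlF_add hv hw, curlF_add (contDiff_curl_comp hv) (contDiff_curl_comp hw)]
  exact hV_add (contDiff_curl_comp (contDiff_curl_comp hv))
    (contDiff_curl_comp (contDiff_curl_comp hw)) s x


/-- Homogeneous Papkovich–Neuber representation: both the classical and the
gradient parts solve the homogeneous SGET equilibrium equation, as does their sum. -/
theorem stmt11 (ν l₁ l₂ : ℝ) (hν₁ : -1 < ν) (hν₂ : ν < 1/2)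
    (Bc Bg : V3 → V3) (φc φg : V3 → ℝ)
    (hBc : ContDiff ℝ (⊤ : ℕ∞) Bc) (hBg : ContDiff ℝ (⊤ : ℕ∞) Bg)
    (hφc : ContDiff ℝ (⊤ : ℕ∞) φc) (hφg : ContDiff ℝ (⊤ : ℕ∞) φg)
    (h1 : ∀ x, vlapF Bc x = 0)
    (h2 : ∀ x, lapF φc x = 0)
    (h3 : ∀ x, hV (l₂^2) Bg x = 0)
    (h4 : ∀ x, dvgF Bg x = 0)
    (h5 : ∀ x, hS (l₁^2) φg x = 0)
    (uc ug u : V3 → V3)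
    (huc : uc = fun x => Bc x
        - (1/(4*(1-ν))) • gradF (fun y => (∑ i, y i * Bc y i) + φc y) x)
    (hug : ug = fun x => Bg x + l₁^2 • gradF φg x)
    (hu : u = fun x => uc x + ug x) :
    (∀ x, (2*(1-ν)/(1-2*ν)) • hV (l₁^2) (gradF (dvgF u)) x
        - hV (l₂^2) (curlF (curlF u)) x = 0) ∧
    (∀ x, (2*(1-ν)/(1-2*ν)) • hV (l₁^2) (gradF (dvgF uc)) x
        - hV (l₂^2) (curlF (curlF uc)) x = 0) ∧
    (∀ x, (2*(1-ν)/(1-2*ν)) • hV (l₁^2) (gradF (dvgF ug)) x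
        - hV (l₂^2) (curlF (curlF ug)) x = 0) := by
  have hBck : ∀ k, ContDiff ℝ (⊤ : ℕ∞) (fun y => Bc y k) := fun k => contDiff_pi.mp hBc k
  have hBgk : ∀ k, ContDiff ℝ (⊤ : ℕ∞) (fun y => Bg y k) := fun k => contDiff_pi.mp hBg k
  have hcoord : ∀ j : Fin 3, ContDiff ℝ (⊤ : ℕ∞) (fun y : V3 => y j) :=
    fun j => contDiff_pi.mp contDiff_id j
  set c : ℝ := 1/(4*(1-ν)) with hcdef
  set ψ : V3 → ℝ := fun y => (∑ i, y i * Bc y i) + φc y with hψdef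
  have hrB : ContDiff ℝ (⊤ : ℕ∞) (fun y : V3 => ∑ i, y i * Bc y i) :=
    ContDiff.sum fun i _ => (hcoord i).mul (hBck i)
  have hψ : ContDiff ℝ (⊤ : ℕ∞) ψ := by rw [hψdef]; exact hrB.add hφc
  -- componentwise hypotheses
  have h1k : ∀ (k : Fin 3) (y : V3), lapF (fun z => Bc z k) y = 0 := fun k y => congrFun (h1 y) k
  -- component formulas for uc, ug
  have huck : ∀ k, (fun y => uc y k) = fun y => Bc y k - c * pd k ψ y := by
    intro k; funext y; rw [huc]; simp [gradF]
  have hucs : ∀ k, ContDiff ℝ (⊤ : ℕ∞) (fun y => uc y k) := fun k => by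
    rw [huck k]; exact (hBck k).sub (contDiff_const.mul (contDiff_pd hψ k))
  have hugk : ∀ k, (fun y => ug y k) = fun y => Bg y k + l₁^2 * pd k φg y := by
    intro k; funext y; rw [hug]; simp [gradF]
  have hugs : ∀ k, ContDiff ℝ (⊤ : ℕ∞) (fun y => ug y k) := fun k => by
    rw [hugk k]; exact (hBgk k).add (contDiff_const.mul (contDiff_pd hφg k))
  -- Laplacian of r·Bc
  have pdirB : ∀ (i : Fin 3), (fun y => pd i (fun z => ∑ j, z j * Bc z j) y)
      = fun y => Bc y i + ∑ j, y j * pd i (fun z => Bc z j) y := by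
    intro i; funext y
    rw [pd_sum Finset.univ (fun j z => z j * Bc z j) i y
      (fun j _ => ((hcoord j).differentiable (by simp) y).mul (da (hBck j) y))]
    have e : ∀ j ∈ Finset.univ, pd i (fun z => z j * Bc z j) y
        = y j * pd i (fun z => Bc z j) y + Bc y j * (if j = i then (1:ℝ) else 0) := by
      intro j _
      rw [pd_mul i y ((hcoord j).differentiable (by simp) y) (da (hBck j) y), pd_coord]
    rw [Finset.sum_congr rfl e, Finset.sum_add_distrib]
    have e2 : ∑ j, Bc y j * (if j = i then (1:ℝ) else 0) = Bc y i := by simp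
    rw [e2]; ring
  have hlaprB : ∀ x, lapF (fun z : V3 => ∑ j, z j * Bc z j) x = 2 * dvgF Bc x := by
    intro x
    show ∑ i, pd i (fun y => pd i (fun z => ∑ j, z j * Bc z j) y) x = _
    have step : ∀ i : Fin 3, pd i (fun y => pd i (fun z => ∑ j, z j * Bc z j) y) x
        = 2 * pd i (fun z => Bc z i) x + ∑ j, x j * pd i (pd i (fun z => Bc z j)) x := by
      intro i
      rw [pdirB i]
      have hsumdiff : DifferentiableAt ℝ (fun y => ∑ j, y j * pd i (fun z => Bc z j) y) x :=
        DifferentiableAt.fun_sum fun j _ =>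
          ((hcoord j).differentiable (by simp) x).mul (da (contDiff_pd (hBck j) i) x)
      rw [pd_add i x (da (hBck i) x) hsumdiff,
        pd_sum Finset.univ (fun j y => y j * pd i (fun z => Bc z j) y) i x
          (fun j _ => ((hcoord j).differentiable (by simp) x).mul (da (contDiff_pd (hBck j) i) x))]
      have e : ∀ j ∈ Finset.univ, pd i (fun y => y j * pd i (fun z => Bc z j) y) x
          = x j * pd i (pd i (fun z => Bc z j)) x
            + pd i (fun z => Bc z j) x * (if j = i then (1:ℝ) else 0) := by
        intro j _
        rw [pd_mul i x ((hcoord j).differentiable (by simp) x) (da (contDiff_pd (hBck j) i) x),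
          pd_coord]
      rw [Finset.sum_congr rfl e, Finset.sum_add_distrib]
      have e2 : ∑ j, pd i (fun z => Bc z j) x * (if j = i then (1:ℝ) else 0)
          = pd i (fun z => Bc z i) x := by simp
      rw [e2]; ring
    rw [Finset.sum_congr rfl (fun i _ => step i), Finset.sum_add_distrib, Finset.sum_comm]
    have e3 : ∀ j ∈ Finset.univ, (∑ i : Fin 3, x j * pd i (pd i (fun z => Bc z j)) x) = 0 := by
      intro j _
      rw [← Finset.mul_sum]
      have e4 : ∑ i : Fin 3, pd i (pd i (fun z => Bc z j)) x = lapF (fun z => Bc z j) x := rfl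
      rw [e4, h1k j x, mul_zero]
    rw [Finset.sum_congr rfl e3]
    simp [dvgF, Finset.mul_sum]
  have hlapψ : ∀ y, lapF ψ y = 2 * dvgF Bc y := by
    intro y
    rw [hψdef, lapF_add hrB hφc y, hlaprB y, h2 y, add_zero]
  -- divergence of uc
  have hdvguc : dvgF uc = fun y => (1 - 2*c) * dvgF Bc y := by
    funext y
    show ∑ k, pd k (fun z => uc z k) y = _
    have e : ∀ k ∈ Finset.univ, pd k (fun z => uc z k) y
        = pd k (fun z => Bc z k) y - c * pd k (fun z => pd k ψ z) y := by
      intro k _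
      rw [huck k, pd_sub k y (da (hBck k) y) (da (contDiff_const.mul (contDiff_pd hψ k)) y),
        pd_const_mul c k y (da (contDiff_pd hψ k) y)]
    rw [Finset.sum_congr rfl e, Finset.sum_sub_distrib, ← Finset.mul_sum]
    have e2 : ∑ k, pd k (fun z => pd k ψ z) y = lapF ψ y := rfl
    rw [e2, hlapψ y]
    show dvgF Bc y - c * (2 * dvgF Bc y) = _
    ring
  -- Laplacian of div Bc vanishes
  have hlapdvgBc : lapF (dvgF Bc) = fun _ => (0:ℝ) := by
    funext y
    show lapF (fun z => ∑ k, pd k (fun w => Bc w k) z) y = 0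
    rw [lapF_sum Finset.univ (fun k => pd k (fun w => Bc w k))
      (fun k _ => contDiff_pd (hBck k) k) y]
    have e : ∀ k ∈ Finset.univ, lapF (pd k (fun w => Bc w k)) y = 0 := by
      intro k _
      rw [lapF_pd (hBck k) k y]
      have e2 : lapF (fun w => Bc w k) = fun _ => (0:ℝ) := funext fun z => h1k k z
      rw [e2, pd_const]
    rw [Finset.sum_congr rfl e]
    simp
  -- Helmholtz term of grad div uc
  have hVgduc : ∀ (x : V3) (k : Fin 3),
      hV (l₁^2) (gradF (dvgF uc)) x k = (1 - 2*c) * pd k (dvgF Bc) x := by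
    intro x k
    rw [hV_apply]
    have hpd : ∀ y, pd k (dvgF uc) y = (1 - 2*c) * pd k (dvgF Bc) y := fun y => by
      rw [hdvguc, pd_const_mul _ k y (da (contDiff_dvgF hBck) y)]
    have hfn : (fun y => gradF (dvgF uc) y k) = fun y => (1 - 2*c) * pd k (dvgF Bc) y :=
      funext fun y => hpd y
    have hfx : gradF (dvgF uc) x k = pd k (dvgF uc) x := rfl
    rw [hfx, hpd x, hfn, lapF_const_mul _ (contDiff_pd (contDiff_dvgF hBck) k) x,
      lapF_pd (contDiff_dvgF hBck) k x, hlapdvgBc, pd_const]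
    ring
  -- Laplacian of uc
  have hvlapuc : ∀ (x : V3) (k : Fin 3), vlapF uc x k = -(2*c) * pd k (dvgF Bc) x := by
    intro x k
    show lapF (fun y => uc y k) x = _
    rw [huck k, lapF_sub (hBck k) (contDiff_const.mul (contDiff_pd hψ k)) x,
      lapF_const_mul c (contDiff_pd hψ k) x, h1k k x, lapF_pd hψ k x,
      show lapF ψ = fun y => 2 * dvgF Bc y from funext hlapψ,
      pd_const_mul 2 k x (da (contDiff_dvgF hBck) x)]
    ring
  -- curl curl of uc
  have hccuc : curlF (curlF uc) = fun x k => pd k (dvgF Bc) x := by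
    funext x k
    rw [curl_curl_eq hucs x k, hvlapuc x k]
    have e : pd k (dvgF uc) x = (1 - 2*c) * pd k (dvgF Bc) x := by
      rw [hdvguc, pd_const_mul _ k x (da (contDiff_dvgF hBck) x)]
    rw [e]; ring
  have hVccuc : ∀ (x : V3) (k : Fin 3),
      hV (l₂^2) (curlF (curlF uc)) x k = pd k (dvgF Bc) x := by
    intro x k
    rw [hccuc, hV_apply]
    show pd k (dvgF Bc) x - l₂^2 * lapF (fun y => pd k (dvgF Bc) y) x = _
    rw [lapF_pd (contDiff_dvgF hBck) k x, hlapdvgBc, pd_const]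
    ring
  -- classical part
  have part2 : ∀ x, (2*(1-ν)/(1-2*ν)) • hV (l₁^2) (gradF (dvgF uc)) x
      - hV (l₂^2) (curlF (curlF uc)) x = 0 := by
    intro x
    funext k
    simp only [Pi.sub_apply, Pi.smul_apply, Pi.zero_apply, smul_eq_mul]
    rw [hVgduc x k, hVccuc x k]
    have hν3 : (1:ℝ) - 2*ν ≠ 0 := ne_of_gt (by linarith)
    have hν4 : (1:ℝ) - ν ≠ 0 := ne_of_gt (by linarith)
    have key : (2*(1-ν)/(1-2*ν)) * (1 - 2*c) = 1 := by
      rw [hcdef]; field_simp; ring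
    have e : (2*(1-ν)/(1-2*ν)) * ((1 - 2*c) * pd k (dvgF Bc) x)
        = ((2*(1-ν)/(1-2*ν)) * (1 - 2*c)) * pd k (dvgF Bc) x := by ring
    rw [e, key, one_mul, sub_self]
  -- gradient part
  have hdvgug : dvgF ug = φg := by
    funext y
    show ∑ k, pd k (fun z => ug z k) y = _
    have e : ∀ k ∈ Finset.univ, pd k (fun z => ug z k) y
        = pd k (fun z => Bg z k) y + l₁^2 * pd k (fun z => pd k φg z) y := by
      intro k _
      rw [hugk k, pd_add k y (da (hBgk k) y) (da (contDiff_const.mul (contDiff_pd hφg k)) y),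
        pd_const_mul (l₁^2) k y (da (contDiff_pd hφg k) y)]
    rw [Finset.sum_congr rfl e, Finset.sum_add_distrib, ← Finset.mul_sum]
    have e2 : ∑ k, pd k (fun z => pd k φg z) y = lapF φg y := rfl
    have e3 : (∑ k, pd k (fun z => Bg z k) y) = dvgF Bg y := rfl
    rw [e2, e3, h4 y]
    have e5 := h5 y
    show 0 + l₁^2 * lapF φg y = φg y
    simp only [hS] at e5
    linarith
  have hVgdug : ∀ (x : V3) (k : Fin 3), hV (l₁^2) (gradF (dvgF ug)) x k = 0 := by
    intro x k
    rw [hdvgug, hV_apply]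
    have hfn : (fun y => gradF φg y k) = fun y => pd k φg y := rfl
    have hfx : gradF φg x k = pd k φg x := rfl
    rw [hfx, hfn, lapF_pd hφg k x]
    have hsz : (fun y => φg y - l₁^2 * lapF φg y) = fun _ => (0:ℝ) := funext fun y => h5 y
    have e : pd k (fun y => φg y - l₁^2 * lapF φg y) x
        = pd k φg x - l₁^2 * pd k (lapF φg) x := by
      rw [pd_sub k x (da hφg x) (da (contDiff_const.mul (contDiff_lapF hφg)) x),
        pd_const_mul (l₁^2) k x (da (contDiff_lapF hφg) x)]
    rw [hsz, pd_const] at e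
    linarith
  have hcurlug : curlF ug = curlF Bg := by
    funext x k
    have key : ∀ a b : Fin 3, pd a (fun y => ug y b) x
        = pd a (fun y => Bg y b) x + l₁^2 * pd a (pd b φg) x := by
      intro a b
      rw [hugk b, pd_add a x (da (hBgk b) x) (da (contDiff_const.mul (contDiff_pd hφg b)) x),
        pd_const_mul (l₁^2) a x (da (contDiff_pd hφg b) x)]
    have h0 : curlF ug x 0 = curlF Bg x 0 := by
      show pd 1 (fun y => ug y 2) x - pd 2 (fun y => ug y 1) x
        = pd 1 (fun y => Bg y 2) x - pd 2 (fun y => Bg y 1) x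
      rw [key, key, pd_comm hφg 1 2]; ring
    have hh1 : curlF ug x 1 = curlF Bg x 1 := by
      show pd 2 (fun y => ug y 0) x - pd 0 (fun y => ug y 2) x
        = pd 2 (fun y => Bg y 0) x - pd 0 (fun y => Bg y 2) x
      rw [key, key, pd_comm hφg 2 0]; ring
    have hh2 : curlF ug x 2 = curlF Bg x 2 := by
      show pd 0 (fun y => ug y 1) x - pd 1 (fun y => ug y 0) x
        = pd 0 (fun y => Bg y 1) x - pd 1 (fun y => Bg y 0) x
      rw [key, key, pd_comm hφg 0 1]; ring
    fin_cases k
    · exact h0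
    · exact hh1
    · exact hh2
  have h3k : ∀ (k : Fin 3) (y : V3), Bg y k = l₂^2 * lapF (fun z => Bg z k) y := by
    intro k y
    have := congrFun (h3 y) k
    simp only [hV, Pi.sub_apply, Pi.smul_apply, Pi.zero_apply, smul_eq_mul] at this
    have e : vlapF Bg y k = lapF (fun z => Bg z k) y := rfl
    rw [e] at this
    linarith
  have hccBg : curlF (curlF Bg) = fun x k => -(lapF (fun y => Bg y k) x) := by
    funext x k
    rw [curl_curl_eq hBgk x k, show dvgF Bg = fun _ => (0:ℝ) from funext h4, pd_const]
    show 0 - lapF (fun y => Bg y k) x = _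
    ring
  have hVccug : ∀ x : V3, hV (l₂^2) (curlF (curlF ug)) x = 0 := by
    intro x
    rw [hcurlug, hccBg]
    funext k
    rw [hV_apply]
    show -(lapF (fun y => Bg y k) x)
        - l₂^2 * lapF (fun y => -(lapF (fun z => Bg z k) y)) x = (0 : V3) k
    rw [lapF_neg (contDiff_lapF (hBgk k)) x]
    have e : lapF (fun y => Bg y k) x = l₂^2 * lapF (lapF (fun z => Bg z k)) x := by
      conv_lhs => rw [show (fun y => Bg y k) = fun y => l₂^2 * lapF (fun z => Bg z k) y
        from funext fun y => h3k k y]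
      rw [lapF_const_mul _ (contDiff_lapF (hBgk k)) x]
    show _ = (0:ℝ)
    rw [e]; ring
  have part3 : ∀ x, (2*(1-ν)/(1-2*ν)) • hV (l₁^2) (gradF (dvgF ug)) x
      - hV (l₂^2) (curlF (curlF ug)) x = 0 := by
    intro x
    rw [hVccug x]
    funext k
    simp only [Pi.sub_apply, Pi.smul_apply, Pi.zero_apply, smul_eq_mul]
    rw [hVgdug x k]
    ring
  -- sum part
  have part1 : ∀ x, (2*(1-ν)/(1-2*ν)) • hV (l₁^2) (gradF (dvgF u)) x
      - hV (l₂^2) (curlF (curlF u)) x = 0 := by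
    intro x
    rw [hu, hV_grad_dvg_add hucs hugs, hV_curlcurl_add hucs hugs, smul_add]
    have e : (2*(1-ν)/(1-2*ν)) • hV (l₁^2) (gradF (dvgF uc)) x
          + (2*(1-ν)/(1-2*ν)) • hV (l₁^2) (gradF (dvgF ug)) x
          - (hV (l₂^2) (curlF (curlF uc)) x + hV (l₂^2) (curlF (curlF ug)) x)
        = ((2*(1-ν)/(1-2*ν)) • hV (l₁^2) (gradF (dvgF uc)) x
            - hV (l₂^2) (curlF (curlF uc)) x)
          + ((2*(1-ν)/(1-2*ν)) • hV (l₁^2) (gradF (dvgF ug)) x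
            - hV (l₂^2) (curlF (curlF ug)) x) := by abel
    rw [e, part2 x, part3 x, add_zero]
  exact ⟨part1, part2, part3⟩
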